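/- For every g = (z,t) ∈ V₁ × V₂ with g ≠ (0,0) and all u, v ∈ V₁, the symmetrized second horizontal derivative of the gauge N satisfies N_{,uv}(g) = N(g)⁻⁷ [ a(g) ψ(g) ⟨u,v⟩ + 2 a(g) ( ⟨z,u⟩⟨z,v⟩ + ⟨[z,u],[z,v]⟩ ) − 3 ⟨A(g),u⟩⟨A(g),v⟩ ]. -/

import Mathlib

open scoped RealInnerProductSpace
open MeasureTheory

noncomputable section

variable {V₁ V₂ : Type*} [NormedAddCommGroup V₁] [InnerProductSpace ℝ V₁]
  [NormedAddCommGroup V₂] [InnerProductSpace ℝ V₂]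

/-- The horizontal derivative of `f : V₁ × V₂ → ℝ` at `g = (z,t)` in the horizontal
direction `v ∈ V₁`, namely `Df(g)(v, ½[z,v])`. -/
def Xd (b : V₁ →ₗ[ℝ] V₁ →ₗ[ℝ] V₂) (v : V₁) (f : V₁ × V₂ → ℝ) (g : V₁ × V₂) : ℝ :=
  fderiv ℝ f g (v, (2⁻¹ : ℝ) • b g.1 v)

/-- The horizontal gradient: the unique vector of `V₁` representing the linear functional
`v ↦ X_v f (g)` via the inner product of `V₁`. -/
def Xgrad [FiniteDimensional ℝ V₁] [FiniteDimensional ℝ V₂]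
    (b : V₁ →ₗ[ℝ] V₁ →ₗ[ℝ] V₂) (f : V₁ × V₂ → ℝ) (g : V₁ × V₂) : V₁ :=
  (InnerProductSpace.toDual ℝ V₁).symm
    (LinearMap.toContinuousLinearMap
      ((fderiv ℝ f g).toLinearMap.comp
        (LinearMap.prod LinearMap.id ((2⁻¹ : ℝ) • b g.1))))

/-- The symmetrized second horizontal derivative `f_{,uv} = ½(X_u X_v f + X_v X_u f)`. -/
def X2sym (b : V₁ →ₗ[ℝ] V₁ →ₗ[ℝ] V₂) (u v : V₁) (f : V₁ × V₂ → ℝ) (g : V₁ × V₂) : ℝ :=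
  (Xd b u (Xd b v f) g + Xd b v (Xd b u f) g) / 2

/-- The horizontal (sub-)Laplacian `𝓛 f = Σᵢ X_{eᵢ} X_{eᵢ} f`. -/
def hLap [FiniteDimensional ℝ V₁] (b : V₁ →ₗ[ℝ] V₁ →ₗ[ℝ] V₂) (f : V₁ × V₂ → ℝ)
    (g : V₁ × V₂) : ℝ :=
  ∑ i, Xd b (stdOrthonormalBasis ℝ V₁ i) (Xd b (stdOrthonormalBasis ℝ V₁ i) f) g

/-- The horizontal ∞-Laplacian `𝓛_∞ f = Σ_{i,j} f_{,eᵢeⱼ} X_{eᵢ}f X_{eⱼ}f`. -/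
def hInfLap [FiniteDimensional ℝ V₁] (b : V₁ →ₗ[ℝ] V₁ →ₗ[ℝ] V₂) (f : V₁ × V₂ → ℝ)
    (g : V₁ × V₂) : ℝ :=
  ∑ i, ∑ j, X2sym b (stdOrthonormalBasis ℝ V₁ i) (stdOrthonormalBasis ℝ V₁ j) f g *
    Xd b (stdOrthonormalBasis ℝ V₁ i) f g * Xd b (stdOrthonormalBasis ℝ V₁ j) f g

/-- `ψ(z,t) = |z|²`. -/
def psiF (g : V₁ × V₂) : ℝ := ‖g.1‖ ^ 2

/-- `χ(z,t) = |t|²`. -/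
def chiF (g : V₁ × V₂) : ℝ := ‖g.2‖ ^ 2

/-- `a(z,t) = ψ² + 16χ = |z|⁴ + 16|t|²`. -/
def aF (g : V₁ × V₂) : ℝ := psiF g ^ 2 + 16 * chiF g

/-- The Folland–Kaplan gauge `N = a^{1/4}`. -/
def Ng (g : V₁ × V₂) : ℝ := aF g ^ ((1 : ℝ) / 4)

/-- `A(z,t) = |z|² z + 4 J(t) z`. -/
def Ag (J : V₂ → V₁ →ₗ[ℝ] V₁) (g : V₁ × V₂) : V₁ :=
  ‖g.1‖ ^ 2 • g.1 + (4 : ℝ) • J g.2 g.1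

/-- The group law `(z,t)·(z',t') = (z+z', t+t'+½[z,z'])`. -/
def gmul (b : V₁ →ₗ[ℝ] V₁ →ₗ[ℝ] V₂) (g h : V₁ × V₂) : V₁ × V₂ :=
  (g.1 + h.1, g.2 + h.2 + (2⁻¹ : ℝ) • b g.1 h.1)

/-- The group inverse `(z,t)⁻¹ = (−z,−t)`. -/
def ginv (g : V₁ × V₂) : V₁ × V₂ := (-g.1, -g.2)

end

/-!
Since the `t`-component of the horizontal direction is `½[z,v]`, the term `16|t|²` of `a`
contributes `16⟨t,[z,v]⟩ = 16⟨J(t)z,v⟩`, so `X_v a = 4⟨A,v⟩`. The chain rule for `N = a^{1/4}`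
gives `X_v N = a^{-3/4}⟨A,v⟩`, and differentiating once more,
`X_u X_v N = a^{-7/4}(a X_u⟨A,v⟩ - 3⟨A,u⟩⟨A,v⟩)`. The only non-symmetric term of `X_u⟨A,v⟩` is
`4⟨[u,v],t⟩`, which cancels in `N_{,uv}` by skew-symmetry of the bracket.
-/

open Topology

section HorizontalDerivative
variable {V₁ V₂ : Type*} [NormedAddCommGroup V₁] [InnerProductSpace ℝ V₁]
  [NormedAddCommGroup V₂] [InnerProductSpace ℝ V₂]
  (b : V₁ →ₗ[ℝ] V₁ →ₗ[ℝ] V₂) (v : V₁) {f h : V₁ × V₂ → ℝ} {g : V₁ × V₂}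

theorem Xd_congr (hfh : f =ᶠ[𝓝 g] h) : Xd b v f g = Xd b v h g := by
  rw [Xd, Xd, hfh.fderiv_eq]

theorem Xd_mul (hf : DifferentiableAt ℝ f g) (hh : DifferentiableAt ℝ h g) :
    Xd b v (fun p => f p * h p) g = f g * Xd b v h g + h g * Xd b v f g := by
  simp [Xd, fderiv_fun_mul hf hh]

theorem Xd_rpow_const {r : ℝ} (hf : DifferentiableAt ℝ f g) (hfg : f g ≠ 0) :
    Xd b v (fun p => f p ^ r) g = r * f g ^ (r - 1) * Xd b v f g := by
  simp [Xd, (hf.hasFDerivAt.rpow_const (Or.inl hfg)).fderiv]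

end HorizontalDerivative

section Gauge
variable {V₁ V₂ : Type*} [NormedAddCommGroup V₁] [NormedAddCommGroup V₂]

theorem aF_nonneg (g : V₁ × V₂) : 0 ≤ aF g := by
  unfold aF chiF; positivity

theorem aF_eq_zero_iff {g : V₁ × V₂} : aF g = 0 ↔ g = 0 := by
  rw [aF, psiF, chiF, add_eq_zero_iff_of_nonneg (by positivity) (by positivity)]
  simp [Prod.ext_iff]

theorem Ng_pow_seven_inv (g : V₁ × V₂) : (Ng g ^ 7)⁻¹ = aF g ^ (-(7 / 4 : ℝ)) := by
  rw [Ng, ← Real.rpow_natCast, ← Real.rpow_mul (aF_nonneg g), ← Real.rpow_neg (aF_nonneg g)]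
  norm_num

variable [InnerProductSpace ℝ V₁] [InnerProductSpace ℝ V₂]

def innerA (b : V₁ →ₗ[ℝ] V₁ →ₗ[ℝ] V₂) (g : V₁ × V₂) (v : V₁) : ℝ :=
  ‖g.1‖ ^ 2 * ⟪g.1, v⟫ + 4 * ⟪b g.1 v, g.2⟫

theorem inner_Ag {b : V₁ →ₗ[ℝ] V₁ →ₗ[ℝ] V₂} {J : V₂ → V₁ →ₗ[ℝ] V₁}
    (hJ : ∀ (t : V₂) (z z' : V₁), ⟪J t z, z'⟫ = ⟪b z z', t⟫) (g : V₁ × V₂) (v : V₁) :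
    ⟪Ag J g, v⟫ = innerA b g v := by
  simp [Ag, innerA, inner_add_left, real_inner_smul_left, hJ]

theorem differentiable_aF : Differentiable ℝ (aF : V₁ × V₂ → ℝ) := fun _ =>
  ((differentiableAt_fst.norm_sq ℝ).pow 2).add ((differentiableAt_snd.norm_sq ℝ).const_mul 16)

theorem Xd_aF (b : V₁ →ₗ[ℝ] V₁ →ₗ[ℝ] V₂) (v : V₁) (g : V₁ × V₂) :
    Xd b v aF g = 4 * innerA b g v := by
  have hD : HasFDerivAt aF _ g := ((hasFDerivAt_fst (p := g)).norm_sq.pow 2).add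
    ((hasFDerivAt_snd (p := g)).norm_sq.const_mul 16)
  rw [Xd, hD.fderiv]
  simp [innerA, real_inner_comm g.2]
  ring

theorem Xd_Ng (b : V₁ →ₗ[ℝ] V₁ →ₗ[ℝ] V₂) (v : V₁) {g : V₁ × V₂} (ha : aF g ≠ 0) :
    Xd b v Ng g = aF g ^ (-(3 / 4 : ℝ)) * innerA b g v := by
  rw [show (Ng : V₁ × V₂ → ℝ) = fun p => aF p ^ (1 / 4 : ℝ) from rfl,
    Xd_rpow_const b v (differentiable_aF g) ha, Xd_aF]
  norm_num
  ring

variable [FiniteDimensional ℝ V₁]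

theorem hasFDerivAt_apply_fst (b : V₁ →ₗ[ℝ] V₁ →ₗ[ℝ] V₂) (v : V₁) (g : V₁ × V₂) :
    HasFDerivAt (fun p : V₁ × V₂ => b p.1 v)
      ((b.flip v).toContinuousLinearMap.comp (ContinuousLinearMap.fst ℝ V₁ V₂)) g :=
  ((b.flip v).toContinuousLinearMap.comp (ContinuousLinearMap.fst ℝ V₁ V₂)).hasFDerivAt

theorem differentiable_innerA (b : V₁ →ₗ[ℝ] V₁ →ₗ[ℝ] V₂) (v : V₁) :
    Differentiable ℝ (fun p : V₁ × V₂ => innerA b p v) := fun g =>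
  ((differentiableAt_fst.norm_sq ℝ).mul
    (differentiableAt_fst.inner ℝ (differentiableAt_const v))).add
    (((hasFDerivAt_apply_fst b v g).differentiableAt.inner ℝ differentiableAt_snd).const_mul 4)

theorem Xd_innerA (b : V₁ →ₗ[ℝ] V₁ →ₗ[ℝ] V₂) (u v : V₁) (g : V₁ × V₂) :
    Xd b u (fun p => innerA b p v) g =
      2 * ⟪g.1, u⟫ * ⟪g.1, v⟫ + ‖g.1‖ ^ 2 * ⟪u, v⟫ + 4 * ⟪b u v, g.2⟫ +
        2 * ⟪b g.1 u, b g.1 v⟫ := by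
  have hD : HasFDerivAt (fun p => innerA b p v) _ g :=
    ((hasFDerivAt_fst (p := g)).norm_sq.mul
      ((hasFDerivAt_fst (p := g)).inner ℝ (hasFDerivAt_const v g))).add
      (((hasFDerivAt_apply_fst b v g).inner ℝ hasFDerivAt_snd).const_mul 4)
  rw [Xd, hD.fderiv]
  simp [inner_smul_right, real_inner_comm (b g.1 v)]
  ring

theorem Xd_Xd_Ng (b : V₁ →ₗ[ℝ] V₁ →ₗ[ℝ] V₂) (u v : V₁) {g : V₁ × V₂} (ha : aF g ≠ 0) :
    Xd b u (Xd b v Ng) g = aF g ^ (-(7 / 4 : ℝ)) *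
      (aF g * Xd b u (fun p => innerA b p v) g - 3 * innerA b g u * innerA b g v) := by
  have hXv : Xd b v Ng =ᶠ[𝓝 g] fun p => aF p ^ (-(3 / 4 : ℝ)) * innerA b p v :=
    (differentiable_aF.continuous.continuousAt.eventually_ne ha).mono fun p hp => Xd_Ng b v hp
  have hpow : aF g ^ (-(3 / 4 : ℝ)) = aF g * aF g ^ (-(7 / 4 : ℝ)) := by
    rw [← Real.rpow_one_add' (aF_nonneg g) (by norm_num)]
    norm_num
  rw [Xd_congr b u hXv, Xd_mul b u ((differentiable_aF g).rpow_const (Or.inl ha))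
    (differentiable_innerA b v g), Xd_rpow_const b u (differentiable_aF g) ha, Xd_aF, hpow]
  norm_num
  ring

end Gauge

theorem riesz_htype_hessian_N_general {V₁ V₂ : Type*} [NormedAddCommGroup V₁] [InnerProductSpace ℝ V₁]
    [FiniteDimensional ℝ V₁] [NormedAddCommGroup V₂] [InnerProductSpace ℝ V₂]
    (b : V₁ →ₗ[ℝ] V₁ →ₗ[ℝ] V₂) (hskew : ∀ z z' : V₁, b z z' = - b z' z)
    (J : V₂ → V₁ →ₗ[ℝ] V₁) (hJ : ∀ (t : V₂) (z z' : V₁), ⟪J t z, z'⟫ = ⟪b z z', t⟫) :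
    ∀ g : V₁ × V₂, g ≠ (0, 0) → ∀ u v : V₁,
      X2sym b u v Ng g =
        ((Ng g) ^ 7)⁻¹ * (aF g * psiF g * ⟪u, v⟫ +
          2 * aF g * (⟪g.1, u⟫ * ⟪g.1, v⟫ + ⟪b g.1 u, b g.1 v⟫) -
          3 * ⟪Ag J g, u⟫ * ⟪Ag J g, v⟫) := by
  intro g hg u v
  have ha : aF g ≠ 0 := aF_eq_zero_iff.not.mpr hg
  rw [X2sym, Xd_Xd_Ng b u v ha, Xd_Xd_Ng b v u ha, Xd_innerA, Xd_innerA, Ng_pow_seven_inv,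
    inner_Ag hJ, inner_Ag hJ, psiF, hskew v u, inner_neg_left, real_inner_comm u v,
    real_inner_comm (b g.1 u)]
  ring

theorem riesz_htype_hessian_N {V₁ V₂ : Type*} [NormedAddCommGroup V₁] [InnerProductSpace ℝ V₁]
    [FiniteDimensional ℝ V₁] [NormedAddCommGroup V₂] [InnerProductSpace ℝ V₂]
    [FiniteDimensional ℝ V₂] (m k : ℕ) (hm : 1 ≤ m) (hk : 1 ≤ k)
    (hdV₁ : Module.finrank ℝ V₁ = m) (hdV₂ : Module.finrank ℝ V₂ = k)
    (b : V₁ →ₗ[ℝ] V₁ →ₗ[ℝ] V₂) (hskew : ∀ z z' : V₁, b z z' = - b z' z)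
    (J : V₂ → V₁ →ₗ[ℝ] V₁) (hJ : ∀ (t : V₂) (z z' : V₁), ⟪J t z, z'⟫ = ⟪b z z', t⟫) :
    ∀ g : V₁ × V₂, g ≠ (0, 0) → ∀ u v : V₁,
      X2sym b u v Ng g =
        ((Ng g) ^ 7)⁻¹ * (aF g * psiF g * ⟪u, v⟫ +
          2 * aF g * (⟪g.1, u⟫ * ⟪g.1, v⟫ + ⟪b g.1 u, b g.1 v⟫) -
          3 * ⟪Ag J g, u⟫ * ⟪Ag J g, v⟫) :=
  riesz_htype_hessian_N_general b hskew J hJ
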